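/- arXiv:1711.08041 — 4 statements merged into one kernel-verified Lean document; each statement's English description precedes it below -/
import Mathlib

section
/- Let G = (V, E) be a directed graph with |V| = n, let Δ ≥ 1 and t ≥ 2 be integers with n = t·Δ, and let z : ℤ/tℤ → V be an injective map with image Z (the 'representatives'). Define a family 𝒮 of subsets of V as follows: a set S belongs to 𝒮 if and only if there exist i ∈ ℤ/tℤ and vertices v_0, v_1, …, v_Δ with v_0 = z(i), v_Δ = z(i+1), the vertices v_0, …, v_Δ pairwise distinct, (v_j, v_{j+1}) ∈ E for all 0 ≤ j < Δ, v_j ∉ Z for all 0 < j < Δ, and S = {v_0, v_1, …, v_{Δ−1}}. Then the following are equivalent: (i) there exists a bijection σ : ℤ/nℤ → V such that (σ(j), σ(j+1)) ∈ E for all j ∈ ℤ/nℤ and σ(i·Δ) = z(i) for all i ∈ ℤ/tℤ (a Hamiltonian cycle of G in which the representatives appear in the order z(0), z(1), …, z(t−1), each at distance exactly Δ from the next); (ii) there exist t members of 𝒮 whose union is V. -/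
private lemma aux_close {n a b : ℕ} [NeZero n] (h : (a : ZMod n) = (b : ZMod n))
    (h1 : a < b + n) (h2 : b < a + n) : a = b := by
  have hm : a ≡ b [MOD n] := (ZMod.natCast_eq_natCast_iff _ _ _).mp h
  obtain ⟨k, hk⟩ := (Nat.modEq_iff_dvd).mp hm
  have hn0 : 0 < (n:ℤ) := by
    have := Nat.pos_of_ne_zero (NeZero.ne n); exact_mod_cast this
  have h1' : (a:ℤ) < b + n := by exact_mod_cast h1
  have h2' : (b:ℤ) < a + n := by exact_mod_cast h2
  have hk0 : k = 0 := by
    rcases lt_trichotomy k 0 with hc|hc|hc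
    · exfalso
      have h3 : (n:ℤ) * k ≤ n * (-1) :=
        mul_le_mul_of_nonneg_left (by omega) (le_of_lt hn0)
      rw [mul_neg_one] at h3
      linarith
    · exact hc
    · exfalso
      have h3 : (n:ℤ) * 1 ≤ n * k :=
        mul_le_mul_of_nonneg_left (by omega) (le_of_lt hn0)
      rw [mul_one] at h3
      linarith
  rw [hk0, mul_zero] at hk
  have : (a:ℤ) = b := by linarith
  exact_mod_cast this

private lemma aux_close' {n X a b : ℕ} [NeZero n]
    (h : ((X + a : ℕ) : ZMod n) = ((X + b : ℕ) : ZMod n)) (ha : a < n) (hb : b < n) : a = b := by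
  have := aux_close h (by omega) (by omega)
  omega

private lemma aux_seg {Δ i k j : ℕ} (hΔ : 0 < Δ) (hj : j < Δ) (h : i * Δ + j = k * Δ) :
    j = 0 ∧ i = k := by
  have h' : (i:ℤ) * Δ + j = k * Δ := by exact_mod_cast h
  have hΔ' : (0:ℤ) < Δ := by exact_mod_cast hΔ
  have hj' : (j:ℤ) < Δ := by exact_mod_cast hj
  have hj0 : (0:ℤ) ≤ j := Int.natCast_nonneg j
  have hik : (i:ℤ) = k := by
    rcases lt_trichotomy (i:ℤ) k with hc|hc|hc
    · exfalso
      have h1 : ((i:ℤ)+1) * Δ ≤ k * Δ :=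
        mul_le_mul_of_nonneg_right (by omega) (le_of_lt hΔ')
      nlinarith
    · exact hc
    · exfalso
      have h1 : ((k:ℤ)+1) * Δ ≤ i * Δ :=
        mul_le_mul_of_nonneg_right (by omega) (le_of_lt hΔ')
      nlinarith
  constructor
  · have : (j:ℤ) = 0 := by rw [hik] at h'; linarith
    exact_mod_cast this
  · exact_mod_cast hik

private lemma aux_bound {t Δ q r : ℕ} (hq : q < t) (hr : r < Δ) : q * Δ + r < t * Δ := by
  have h2 : (q + 1) * Δ ≤ t * Δ := Nat.mul_le_mul_right Δ (by omega)
  calc q * Δ + r < q * Δ + Δ := by omega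
    _ = (q + 1) * Δ := by ring
    _ ≤ t * Δ := h2
theorem directed_ham_iff_setcover {V : Type*} [Fintype V] [DecidableEq V]
    (E : V → V → Prop)
    (n Δ t : ℕ) [NeZero n] [NeZero t]
    (hΔ : 1 ≤ Δ) (ht : 2 ≤ t)
    (hcard : Fintype.card V = n) (hn : n = t * Δ)
    (z : ZMod t → V) (hz : Function.Injective z)
    (𝒮 : Set (Set V))
    (h𝒮 : ∀ S : Set V, S ∈ 𝒮 ↔
      ∃ (i : ZMod t) (v : Fin (Δ + 1) → V),
        v 0 = z i ∧
        v (Fin.last Δ) = z (i + 1) ∧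
        Function.Injective v ∧
        (∀ j : Fin Δ, E (v j.castSucc) (v j.succ)) ∧
        (∀ j : Fin (Δ + 1), j ≠ 0 → j ≠ Fin.last Δ → v j ∉ Set.range z) ∧
        S = v '' {j | j ≠ Fin.last Δ}) :
    ((∃ σ : ZMod n → V, Function.Bijective σ ∧
        (∀ j : ZMod n, E (σ j) (σ (j + 1))) ∧
        (∀ i : ZMod t, σ ((i.val * Δ : ℕ) : ZMod n) = z i))
      ↔
     (∃ F : Finset (Set V), F.card = t ∧ (∀ s ∈ F, s ∈ 𝒮) ∧
        ⋃₀ (F : Set (Set V)) = Set.univ)) := by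
  classical
  have hΔ0 : 0 < Δ := hΔ
  have ht0 : 0 < t := by omega
  have hΔn : Δ < n := by
    have h2 : 2 * Δ ≤ t * Δ := Nat.mul_le_mul_right Δ ht
    have : n = t * Δ := hn
    linarith
  constructor
  · -- forward
    rintro ⟨σ, hbij, hedge, hrep⟩
    set v : ZMod t → Fin (Δ+1) → V :=
      fun i j => σ (((i.val * Δ + j.val : ℕ) : ZMod n)) with hv
    have hv0 : ∀ i : ZMod t, v i 0 = z i := by
      intro i
      simp only [hv, Fin.val_zero, Nat.add_zero]
      exact hrep i
    have hSmem : ∀ i : ZMod t, (v i '' {j | j ≠ Fin.last Δ}) ∈ 𝒮 := by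
      intro i
      rw [h𝒮]
      refine ⟨i, v i, hv0 i, ?_, ?_, ?_, ?_, rfl⟩
      · -- last vertex is z (i+1)
        simp only [hv, Fin.val_last]
        have h1 : ((i.val * Δ + Δ : ℕ) : ZMod n) = (((i+1).val * Δ : ℕ) : ZMod n) := by
          rw [ZMod.natCast_eq_natCast_iff, hn]
          have h2 : (i.val + 1) ≡ (i+1).val [MOD t] := by
            rw [← ZMod.natCast_eq_natCast_iff]
            push_cast
            rw [ZMod.natCast_rightInverse i, ZMod.natCast_rightInverse (i+1)]
          have h3 := Nat.ModEq.mul_right' Δ h2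
          have h4 : (i.val + 1) * Δ = i.val * Δ + Δ := by ring
          rw [← h4]
          exact h3
        rw [h1]
        exact hrep (i+1)
      · -- injectivity
        intro j j' hjj'
        simp only [hv] at hjj'
        have h1 := hbij.1 hjj'
        have h2 : j.val = j'.val := by
          apply aux_close' h1
          · have := j.is_le; omega
          · have := j'.is_le; omega
        exact Fin.ext h2
      · -- edges
        intro j
        simp only [hv]
        have e2 : ((i.val * Δ + (j.succ).val : ℕ) : ZMod n)
            = ((i.val * Δ + (j.castSucc).val : ℕ) : ZMod n) + 1 := by
          rw [Fin.val_succ, Fin.coe_castSucc]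
          push_cast
          ring
        rw [e2]
        exact hedge _
      · -- interior avoids Z
        rintro j hj0 hjl ⟨k, hk⟩
        have hzk := hrep k
        rw [← hzk] at hk
        simp only [hv] at hk
        have h1 := hbij.1 hk
        have hj0' : j.val ≠ 0 := by
          intro hh; exact hj0 (Fin.ext (by simpa using hh))
        have hjl' : j.val ≠ Δ := by
          intro hh; exact hjl (Fin.ext (by simpa [Fin.val_last] using hh))
        have hjlt : j.val < Δ := by have := j.is_le; omega
        have hlt1 : k.val * Δ < n := by
          rw [hn]
          have := aux_bound (ZMod.val_lt k) hΔ0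
          omega
        have hlt2 : i.val * Δ + j.val < n := hn ▸ aux_bound (ZMod.val_lt i) hjlt
        have heq : k.val * Δ = i.val * Δ + j.val :=
          aux_close h1 (lt_of_lt_of_le hlt1 (Nat.le_add_left _ _))
            (lt_of_lt_of_le hlt2 (Nat.le_add_left _ _))
        obtain ⟨hj00, -⟩ := aux_seg hΔ0 hjlt heq.symm
        exact hj0' hj00
    have hSinj : Function.Injective (fun i : ZMod t => v i '' {j | j ≠ Fin.last Δ}) := by
      intro i i' hii'
      have hz0 : z i ∈ v i '' {j | j ≠ Fin.last Δ} := by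
        refine ⟨0, ?_, hv0 i⟩
        intro hh
        have := congrArg Fin.val hh
        simp [Fin.val_last] at this
        omega
      have hii2 : v i '' {j | j ≠ Fin.last Δ} = v i' '' {j | j ≠ Fin.last Δ} := hii'
      rw [hii2] at hz0
      obtain ⟨j, hjne, hjv⟩ := hz0
      simp only [hv] at hjv
      rw [← hrep i] at hjv
      have h1 := hbij.1 hjv
      have hjlt : j.val < Δ := by
        have h2 := j.is_le
        have h3 : j.val ≠ Δ := by
          intro hh; exact hjne (Fin.ext (by simpa [Fin.val_last] using hh))
        omega
      have hlt1 : i'.val * Δ + j.val < n := hn ▸ aux_bound (ZMod.val_lt i') hjlt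
      have hlt2 : i.val * Δ < n := by
        rw [hn]
        have := aux_bound (ZMod.val_lt i) hΔ0
        omega
      have heq : i'.val * Δ + j.val = i.val * Δ :=
        aux_close h1 (lt_of_lt_of_le hlt1 (Nat.le_add_left _ _))
          (lt_of_lt_of_le hlt2 (Nat.le_add_left _ _))
      obtain ⟨-, hik⟩ := aux_seg hΔ0 hjlt heq
      exact (ZMod.val_injective t hik).symm
    refine ⟨Finset.image (fun i : ZMod t => v i '' {j | j ≠ Fin.last Δ}) Finset.univ, ?_, ?_, ?_⟩
    · rw [Finset.card_image_of_injective _ hSinj, Finset.card_univ, ZMod.card]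
    · intro s hs
      simp only [Finset.mem_image, Finset.mem_univ, true_and] at hs
      obtain ⟨i, rfl⟩ := hs
      exact hSmem i
    · apply Set.eq_univ_of_forall
      intro w
      rw [Set.mem_sUnion]
      obtain ⟨m, rfl⟩ := hbij.2 w
      have hq : m.val / Δ < t := by
        rw [Nat.div_lt_iff_lt_mul hΔ0]
        have h1 := ZMod.val_lt m
        have h2 : n = Δ * t := by rw [hn]; ring
        omega
      have hr : m.val % Δ < Δ := Nat.mod_lt _ hΔ0
      refine ⟨v ((m.val / Δ : ℕ) : ZMod t) '' {j | j ≠ Fin.last Δ}, ?_, ?_⟩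
      · rw [Finset.mem_coe, Finset.mem_image]
        exact ⟨((m.val / Δ : ℕ) : ZMod t), Finset.mem_univ _, rfl⟩
      · refine ⟨⟨m.val % Δ, by omega⟩, ?_, ?_⟩
        · intro hh
          have := congrArg Fin.val hh
          simp [Fin.val_last] at this
          omega
        · simp only [hv]
          congr 1
          rw [ZMod.val_cast_of_lt hq, Nat.div_add_mod']
          exact ZMod.natCast_rightInverse m
  · -- backward
    rintro ⟨F, hFcard, hF𝒮, hFunion⟩
    have hw : ∀ s : {x // x ∈ F}, ∃ (i : ZMod t) (v : Fin (Δ + 1) → V),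
        v 0 = z i ∧ v (Fin.last Δ) = z (i + 1) ∧ Function.Injective v ∧
        (∀ j : Fin Δ, E (v j.castSucc) (v j.succ)) ∧
        (∀ j : Fin (Δ + 1), j ≠ 0 → j ≠ Fin.last Δ → v j ∉ Set.range z) ∧
        (s : Set V) = v '' {j | j ≠ Fin.last Δ} :=
      fun s => (h𝒮 s).mp (hF𝒮 s s.2)
    choose ι P h0 hlastP hinjP hedgeP hZP hSetP using hw
    have hsurjι : Function.Surjective ι := by
      intro i
      have hzi : z i ∈ ⋃₀ (F : Set (Set V)) := by rw [hFunion]; trivial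
      obtain ⟨S, hSF, hzS⟩ := hzi
      have hSF' : S ∈ F := hSF
      have hzS' : z i ∈ P ⟨S, hSF'⟩ '' {j | j ≠ Fin.last Δ} := by
        rw [← hSetP ⟨S, hSF'⟩]; exact hzS
      obtain ⟨j, hjne, hjz⟩ := hzS'
      by_cases hj0 : j = 0
      · subst hj0
        rw [h0 ⟨S, hSF'⟩] at hjz
        exact ⟨⟨S, hSF'⟩, hz hjz⟩
      · exact absurd ⟨i, hjz.symm⟩ (hZP ⟨S, hSF'⟩ j hj0 hjne)
    have hbijι : Function.Bijective ι := by
      rw [Fintype.bijective_iff_surjective_and_card]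
      exact ⟨hsurjι, by rw [Fintype.card_coe, hFcard, ZMod.card]⟩
    set e : {x // x ∈ F} ≃ ZMod t := Equiv.ofBijective ι hbijι with he
    have hιe : ∀ x : ZMod t, ι (e.symm x) = x := fun x => e.apply_symm_apply x
    have hmod : ∀ m : ZMod n, m.val % Δ < Δ + 1 := fun m => by
      have := Nat.mod_lt m.val hΔ0; omega
    set σ : ZMod n → V :=
      fun m => P (e.symm (((m.val / Δ : ℕ) : ZMod t))) ⟨m.val % Δ, hmod m⟩ with hσ
    have key : ∀ (q r : ℕ) (hq : q < t) (hr : r < Δ),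
        σ (((q * Δ + r : ℕ) : ZMod n)) = P (e.symm ((q : ℕ) : ZMod t)) ⟨r, by omega⟩ := by
      intro q r hq hr
      have hlt : q * Δ + r < n := hn ▸ aux_bound hq hr
      have hval : (((q * Δ + r : ℕ) : ZMod n)).val = q * Δ + r := ZMod.val_cast_of_lt hlt
      have hdiv : (q * Δ + r) / Δ = q := by
        rw [mul_comm, Nat.mul_add_div hΔ0, Nat.div_eq_of_lt hr]; omega
      have hmodq : (q * Δ + r) % Δ = r := by
        rw [mul_comm, Nat.mul_add_mod, Nat.mod_eq_of_lt hr]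
      simp only [hσ, hval, hdiv, hmodq]
    have hrep' : ∀ q : ℕ, q ≤ t → σ (((q * Δ : ℕ) : ZMod n)) = z ((q : ℕ) : ZMod t) := by
      intro q hq
      rcases eq_or_lt_of_le hq with rfl | hq'
      · have h1 : ((q * Δ : ℕ) : ZMod n) = ((0 * Δ + 0 : ℕ) : ZMod n) := by
          rw [← hn]
          simp [ZMod.natCast_self]
        rw [h1, key 0 0 ht0 hΔ0]
        have h2 : (⟨0, by omega⟩ : Fin (Δ+1)) = 0 := rfl
        rw [h2, h0, hιe]
        rw [Nat.cast_zero, ZMod.natCast_self]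
      · have hk := key q 0 hq' hΔ0
        rw [Nat.add_zero] at hk
        rw [hk]
        have h2 : (⟨0, by omega⟩ : Fin (Δ+1)) = 0 := rfl
        rw [h2, h0, hιe]
    refine ⟨σ, ?_, ?_, ?_⟩
    · -- bijective
      rw [Fintype.bijective_iff_surjective_and_card]
      refine ⟨?_, by rw [ZMod.card, hcard]⟩
      intro w
      have hw' : w ∈ ⋃₀ (F : Set (Set V)) := by rw [hFunion]; trivial
      obtain ⟨S, hSF, hwS⟩ := hw'
      have hSF' : S ∈ F := hSF
      have hwS' : w ∈ P ⟨S, hSF'⟩ '' {j | j ≠ Fin.last Δ} := by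
        rw [← hSetP ⟨S, hSF'⟩]; exact hwS
      obtain ⟨j, hjne, hjw⟩ := hwS'
      have hjlt : j.val < Δ := by
        have h1 := j.is_le
        have h2 : j.val ≠ Δ := by
          intro hh; exact hjne (Fin.ext (by simpa [Fin.val_last] using hh))
        omega
      refine ⟨((((ι ⟨S, hSF'⟩).val * Δ + j.val : ℕ)) : ZMod n), ?_⟩
      rw [key (ι ⟨S, hSF'⟩).val j.val (ZMod.val_lt _) hjlt]
      rw [ZMod.natCast_rightInverse (ι ⟨S, hSF'⟩)]
      rw [Equiv.ofBijective_symm_apply_apply ι hbijι]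
      rw [Fin.eta]
      exact hjw
    · -- edges
      intro m
      obtain ⟨q, r, hq, hr, hm⟩ : ∃ q r, q < t ∧ r < Δ ∧ m = ((q * Δ + r : ℕ) : ZMod n) := by
        refine ⟨m.val / Δ, m.val % Δ, ?_, Nat.mod_lt _ hΔ0, ?_⟩
        · rw [Nat.div_lt_iff_lt_mul hΔ0]
          have h1 := ZMod.val_lt m
          have h2 : n = Δ * t := by rw [hn]; ring
          omega
        · rw [Nat.div_add_mod']
          exact (ZMod.natCast_rightInverse m).symm
      subst hm
      have hσm := key q r hq hr
      have hι2 : ι (e.symm ((q : ℕ) : ZMod t)) = ((q : ℕ) : ZMod t) := hιe _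
      rcases Nat.lt_or_ge (r+1) Δ with hcase | hcase
      · have hm1 : (((q * Δ + r : ℕ)) : ZMod n) + 1 = (((q * Δ + (r+1) : ℕ)) : ZMod n) := by
          push_cast; ring
        rw [hσm, hm1, key q (r+1) hq hcase]
        exact hedgeP (e.symm ((q : ℕ) : ZMod t)) ⟨r, hr⟩
      · have hrΔ : r + 1 = Δ := by omega
        have hnat : (q+1) * Δ = q * Δ + r + 1 := by rw [← hrΔ]; ring
        have hm1 : (((q * Δ + r : ℕ)) : ZMod n) + 1 = ((((q+1) * Δ : ℕ)) : ZMod n) := by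
          rw [hnat]; push_cast; ring
        rw [hσm, hm1, hrep' (q+1) (by omega)]
        have hlast2 : z (((q+1 : ℕ)) : ZMod t) = P (e.symm ((q : ℕ) : ZMod t)) (Fin.last Δ) := by
          rw [hlastP]
          congr 1
          rw [hι2]
          push_cast
          ring
        rw [hlast2]
        have hsucc : Fin.succ (⟨r, hr⟩ : Fin Δ) = Fin.last Δ := by
          apply Fin.ext
          simp [Fin.val_succ, Fin.val_last, hrΔ]
        rw [← hsucc]
        exact hedgeP (e.symm ((q : ℕ) : ZMod t)) ⟨r, hr⟩
    · -- representatives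
      intro i
      have h1 := hrep' i.val (le_of_lt (ZMod.val_lt i))
      rwa [ZMod.natCast_rightInverse i] at h1
end

section
/- Let G = (V_G, E_G) be a directed graph, and let T = (V_T, E_T) be a directed graph whose underlying undirected graph is a tree. Let S be a finite family of subsets of V_T such that every vertex of T lies in some member of S, every edge of T has both endpoints in a common member of S, each member s ∈ S has a designated vertex ρ(s) ∈ s, and the sets s \ {ρ(s)}, for s ∈ S, are pairwise disjoint. Let R = {ρ(s) : s ∈ S}, and let f : R → V_G be an injective map. Then the following are equivalent: (i) there exists an embedding φ of T into G with φ(v) = f(v) for every v ∈ R; (ii) for every s ∈ S there exists an embedding φ_s of the induced directed subgraph T[s] into G such that φ_s(v) = f(v) for every v ∈ s ∩ R, the image φ_s(s \ R) is disjoint from f(R), and for any two distinct s, s' ∈ S the images φ_s(s \ R) and φ_{s'}(s' \ R) are disjoint. -/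
/-!
STATEMENT 5 (gluing local embeddings of subtrees).
`G = (V_G, E_G)` a directed graph, `T = (V_T, E_T)` a directed graph whose underlying
undirected graph is a tree. `S` is a finite family of subsets of `V_T` covering all
vertices and all edges, each member `s` has a designated vertex `ρ s ∈ s`, and the sets
`s \ {ρ s}` are pairwise disjoint. With `R = {ρ s : s ∈ S}` and `f : R → V_G` injective:
`T` embeds into `G` extending `f` iff each induced subgraph `T[s]` embeds into `G`
extending `f` on `s ∩ R`, with images of `s \ R` avoiding `f(R)` and pairwise disjoint
across distinct members of `S`.
-/
theorem glue_subtree_embeddings {VT VG : Type*} [Fintype VT] [Fintype VG]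
    [DecidableEq VT] [DecidableEq VG]
    (ET : VT → VT → Prop) (EG : VG → VG → Prop)
    (hTree : (SimpleGraph.fromRel ET).IsTree)
    (S : Finset (Set VT)) (ρ : Set VT → VT)
    (hcoverV : ∀ v : VT, ∃ s ∈ S, v ∈ s)
    (hcoverE : ∀ u v : VT, ET u v → ∃ s ∈ S, u ∈ s ∧ v ∈ s)
    (hρ : ∀ s ∈ S, ρ s ∈ s)
    (hdisj : ∀ s ∈ S, ∀ s' ∈ S, s ≠ s' → (s \ {ρ s}) ∩ (s' \ {ρ s'}) = ∅)
    (R : Set VT) (hR : R = {v | ∃ s ∈ S, ρ s = v})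
    (f : VT → VG) (hf : Set.InjOn f R) :
    ((∃ φ : VT → VG, Function.Injective φ ∧
        (∀ u v : VT, ET u v → EG (φ u) (φ v)) ∧
        (∀ v ∈ R, φ v = f v))
      ↔
     (∃ Φ : Set VT → VT → VG,
        (∀ s ∈ S,
          Set.InjOn (Φ s) s ∧
          (∀ u ∈ s, ∀ v ∈ s, ET u v → EG (Φ s u) (Φ s v)) ∧
          (∀ v ∈ s ∩ R, Φ s v = f v) ∧
          (Φ s '' (s \ R)) ∩ (f '' R) = ∅) ∧
        (∀ s ∈ S, ∀ s' ∈ S, s ≠ s' →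
          (Φ s '' (s \ R)) ∩ (Φ s' '' (s' \ R)) = ∅))) := by

  classical
  have hρR : ∀ s ∈ S, ρ s ∈ R := by
    intro s hs; rw [hR]; exact ⟨s, hs, rfl⟩
  have huniq : ∀ s ∈ S, ∀ s' ∈ S, ∀ v : VT, v ∉ R → v ∈ s → v ∈ s' → s = s' := by
    intro s hs s' hs' v hvR hvs hvs'
    by_contra hne
    have h := hdisj s hs s' hs' hne
    have hv : v ∈ (s \ {ρ s}) ∩ (s' \ {ρ s'}) := by
      refine ⟨⟨hvs, ?_⟩, ⟨hvs', ?_⟩⟩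
      · intro h'
        exact hvR (by rw [Set.mem_singleton_iff] at h'; rw [h']; exact hρR s hs)
      · intro h'
        exact hvR (by rw [Set.mem_singleton_iff] at h'; rw [h']; exact hρR s' hs')
    rw [h] at hv; exact hv
  constructor
  · rintro ⟨φ, hinj, hedge, hfix⟩
    refine ⟨fun _ => φ, fun s hs => ⟨hinj.injOn, fun u _ v _ h => hedge u v h,
      fun v hv => hfix v hv.2, ?_⟩, ?_⟩
    · ext x
      simp only [Set.mem_inter_iff, Set.mem_image, Set.mem_empty_iff_false, iff_false, not_and]
      rintro ⟨a, ⟨has, haR⟩, rfl⟩ ⟨b, hb, hfb⟩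
      rw [← hfix b hb] at hfb
      exact haR ((hinj hfb) ▸ hb)
    · intro s hs s' hs' hne
      ext x
      simp only [Set.mem_inter_iff, Set.mem_image, Set.mem_empty_iff_false, iff_false, not_and]
      rintro ⟨a, ⟨has, haR⟩, rfl⟩ ⟨b, ⟨hbs, hbR⟩, hfb⟩
      have hab : b = a := hinj hfb
      subst hab
      exact hne (huniq s hs s' hs' b haR has hbs)
  · rintro ⟨Φ, hloc, hdisjI⟩
    set φ : VT → VG := fun v =>
      if h : v ∈ R then f v else Φ (Classical.choose (hcoverV v)) v with hφdef
    have hφR : ∀ v ∈ R, φ v = f v := by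
      intro v hv; simp only [hφdef, dif_pos hv]
    have hφnR : ∀ v ∉ R, ∀ s ∈ S, v ∈ s → φ v = Φ s v := by
      intro v hv s hs hvs
      have h1 := Classical.choose_spec (hcoverV v)
      have heq : Classical.choose (hcoverV v) = s :=
        huniq _ h1.1 s hs v hv h1.2 hvs
      simp only [hφdef, dif_neg hv, heq]
    have hφall : ∀ v : VT, ∀ s ∈ S, v ∈ s → φ v = Φ s v := by
      intro v s hs hvs
      by_cases hv : v ∈ R
      · rw [hφR v hv, (hloc s hs).2.2.1 v ⟨hvs, hv⟩]
      · exact hφnR v hv s hs hvs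
    have hmem : ∀ v ∉ R, ∀ s ∈ S, v ∈ s → φ v ∈ Φ s '' (s \ R) := by
      intro v hv s hs hvs
      rw [hφnR v hv s hs hvs]
      exact ⟨v, ⟨hvs, hv⟩, rfl⟩
    refine ⟨φ, ?_, ?_, hφR⟩
    · intro a b hab
      by_cases ha : a ∈ R <;> by_cases hb : b ∈ R
      · rw [hφR a ha, hφR b hb] at hab
        exact hf ha hb hab
      · obtain ⟨s, hs, hbs⟩ := hcoverV b
        have h1 : φ b ∈ Φ s '' (s \ R) := hmem b hb s hs hbs
        have h2 : φ a ∈ f '' R := by rw [hφR a ha]; exact ⟨a, ha, rfl⟩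
        have := (hloc s hs).2.2.2
        exfalso
        have : φ b ∈ (Φ s '' (s \ R)) ∩ (f '' R) := ⟨h1, hab ▸ h2⟩
        rw [(hloc s hs).2.2.2] at this; exact this
      · obtain ⟨s, hs, has⟩ := hcoverV a
        have h1 : φ a ∈ Φ s '' (s \ R) := hmem a ha s hs has
        have h2 : φ b ∈ f '' R := by rw [hφR b hb]; exact ⟨b, hb, rfl⟩
        exfalso
        have : φ a ∈ (Φ s '' (s \ R)) ∩ (f '' R) := ⟨h1, hab ▸ h2⟩
        rw [(hloc s hs).2.2.2] at this; exact this
      · obtain ⟨s, hs, has⟩ := hcoverV a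
        obtain ⟨s', hs', hbs⟩ := hcoverV b
        by_cases hss : s = s'
        · subst hss
          rw [hφnR a ha s hs has, hφnR b hb s hs hbs] at hab
          exact (hloc s hs).1 has hbs hab
        · exfalso
          have h1 : φ a ∈ Φ s '' (s \ R) := hmem a ha s hs has
          have h2 : φ b ∈ Φ s' '' (s' \ R) := hmem b hb s' hs' hbs
          have : φ a ∈ (Φ s '' (s \ R)) ∩ (Φ s' '' (s' \ R)) := ⟨h1, hab ▸ h2⟩
          rw [hdisjI s hs s' hs' hss] at this; exact this
    · intro u v h
      obtain ⟨s, hs, hus, hvs⟩ := hcoverE u v h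
      rw [hφall u s hs hus, hφall v s hs hvs]
      exact (hloc s hs).2.1 u hus v hvs h
end

section
/- Fix the construction of G_g and T_g^α described in the context, with positive integers n, m, g satisfying g ≥ 2 and g ∣ 2n. If there exist d ≥ 1 indices i_1 < i_2 < … < i_d in {1,…,m} with S_{i_1} ∪ ⋯ ∪ S_{i_d} = N, then there exists a partition α of n with at most d parts such that T_g^α is isomorphic to a subgraph of G_g, i.e., there is an injective map from the vertices of T_g^α to the vertices of G_g carrying every edge of T_g^α to an edge of G_g. -/
/-!
Construction of the host graph `G_g` and the pattern tree `T_g^α` from the reduction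
of Set Cover to kTree.

Host graph `G_g` (for a Set Cover instance with ground set `N = Fin n` and sets
`S : Fin m → Finset (Fin n)`, with `q = 2n/g`): vertices are
`N ⊔ M ⊔ M_g ⊔ R ⊔ {r_g, r_1, r_2, r}` where `M_g` is the collection of `g`-element
subsets of `M` and `R = {v^i_j : i ∈ {1,2,3,4}, 1 ≤ j ≤ q}`.
Encoding of the four special roots in `HostV.root : Fin 4`:
`root 0 = r_g`, `root 1 = r_1`, `root 2 = r_2`, `root 3 = r`; and in
`HostV.rv i j`: `i = 0,1,2,3` encodes `v^1_j, v^2_j, v^3_j, v^4_j` respectively.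
-/
inductive HostV (n m g q : ℕ) where
  | elem : Fin n → HostV n m g q
  | mset : Fin m → HostV n m g q
  | gset : {X : Finset (Fin m) // X.card = g} → HostV n m g q
  | rv : Fin 4 → Fin q → HostV n m g q
  | root : Fin 4 → HostV n m g q

/-- The edges of the host graph `G_g` (each undirected edge listed in one orientation). -/
def hostRel (n m g q : ℕ) (S : Fin m → Finset (Fin n)) :
    HostV n m g q → HostV n m g q → Prop := fun u v =>
  -- {e, i} for e ∈ N, i ∈ M with e ∈ S_i
  (∃ e i, u = HostV.elem e ∧ v = HostV.mset i ∧ e ∈ S i) ∨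
  -- {e, X} for e ∈ N, X ∈ M_g with e ∈ ⋃_{i ∈ X} S_i
  (∃ e X, u = HostV.elem e ∧ v = HostV.gset X ∧ ∃ i ∈ X.1, e ∈ S i) ∨
  -- {r_g, X} for every X ∈ M_g
  (∃ X, u = HostV.root 0 ∧ v = HostV.gset X) ∨
  -- {r_g, v^4_j} for every j
  (∃ j, u = HostV.root 0 ∧ v = HostV.rv 3 j) ∨
  -- {r_1, v^1_j} for every j
  (∃ j, u = HostV.root 1 ∧ v = HostV.rv 0 j) ∨
  -- {r_2, v^2_j} for every j
  (∃ j, u = HostV.root 2 ∧ v = HostV.rv 1 j) ∨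
  -- {r, r_g}, {r, r_1}, {r, r_2}
  (u = HostV.root 3 ∧ (v = HostV.root 0 ∨ v = HostV.root 1 ∨ v = HostV.root 2)) ∨
  -- {r, i} for every i ∈ M
  (∃ i, u = HostV.root 3 ∧ v = HostV.mset i) ∨
  -- {r, v^3_j} for every j
  (∃ j, u = HostV.root 3 ∧ v = HostV.rv 2 j)

/-- Number of leaves of the `k`-th big star center:
`P_k = p_{(k−1)g+1} + ⋯ + p_{kg}` (0-indexed: indices `k·g, …, k·g+g−1`;
the index is always in range, the `dite` only discharges the bound proof). -/
def bigCnt (l g : ℕ) (p : Fin l → ℕ) (k : Fin (l / g)) : ℕ :=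
  ∑ j : Fin g, if h : (k : ℕ) * g + (j : ℕ) < l then p ⟨(k : ℕ) * g + (j : ℕ), h⟩ else 0

/-- Number of leaves of the `k`-th small star center: `p_{g·⌊l/g⌋ + k}`. -/
def smallCnt (l g : ℕ) (p : Fin l → ℕ) (k : Fin (l % g)) : ℕ :=
  if h : g * (l / g) + (k : ℕ) < l then p ⟨g * (l / g) + (k : ℕ), h⟩ else 0

/-- Star centers of the pattern tree: `⌊l/g⌋` big ones and `g' = l mod g` small ones. -/
abbrev PatC (l g : ℕ) := Fin (l / g) ⊕ Fin (l % g)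

/-- Leaf counts of the star centers. -/
abbrev patCnt (l g : ℕ) (p : Fin l → ℕ) : PatC l g → ℕ :=
  Sum.elim (bigCnt l g p) (smallCnt l g p)

/-!
Pattern tree `T_g^α` for a partition `α = (p_1, …, p_l)` of `n`: vertices are
`{r'_g, r'_1, r'_2, r'} ⊔ R' ⊔ centers ⊔ leaves`.
Encoding in `PatV.root : Fin 4`: `root 0 = r'_g`, `root 1 = r'_1`, `root 2 = r'_2`,
`root 3 = r'`; and `PatV.rv i j` with `i = 0,1,2,3` encodes `v'^1_j, v'^2_j, v'^3_j, v'^4_j`.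
-/
inductive PatV (q : ℕ) (C : Type) (cnt : C → ℕ) where
  | root : Fin 4 → PatV q C cnt
  | rv : Fin 4 → Fin q → PatV q C cnt
  | center : C → PatV q C cnt
  | leaf : (c : C) → Fin (cnt c) → PatV q C cnt

/-- Vertices of the pattern tree `T_g^α`. -/
abbrev PatVert (q l g : ℕ) (p : Fin l → ℕ) := PatV q (PatC l g) (patCnt l g p)

/-- The edges of the pattern tree `T_g^α` (each undirected edge listed once). -/
def patRel (q l g : ℕ) (p : Fin l → ℕ) :
    PatVert q l g p → PatVert q l g p → Prop := fun u v =>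
  -- {r', r'_g}, {r', r'_1}, {r', r'_2}
  (u = PatV.root 3 ∧ (v = PatV.root 0 ∨ v = PatV.root 1 ∨ v = PatV.root 2)) ∨
  -- {r', v'^3_j} for all j
  (∃ j, u = PatV.root 3 ∧ v = PatV.rv 2 j) ∨
  -- {r'_g, v'^4_j} for all j
  (∃ j, u = PatV.root 0 ∧ v = PatV.rv 3 j) ∨
  -- {r'_1, v'^1_j} for all j
  (∃ j, u = PatV.root 1 ∧ v = PatV.rv 0 j) ∨
  -- {r'_2, v'^2_j} for all j
  (∃ j, u = PatV.root 2 ∧ v = PatV.rv 1 j) ∨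
  -- {r'_g, c_k} for the big star centers
  (∃ k, u = PatV.root 0 ∧ v = PatV.center (Sum.inl k)) ∨
  -- {r', c'_k} for the small star centers
  (∃ k, u = PatV.root 3 ∧ v = PatV.center (Sum.inr k)) ∨
  -- each star center joined to each of its own leaves
  (∃ c i, u = PatV.center c ∧ v = PatV.leaf c i)

/-- `EA`-graph is isomorphic to a subgraph of the `EB`-graph: an injective map on
vertices carrying every (undirected) edge to an (undirected) edge. -/
def IsSubgraphIso {A B : Type*} (EA : A → A → Prop) (EB : B → B → Prop) : Prop :=
  ∃ φ : A → B, Function.Injective φ ∧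
    ∀ u v, EA u v → (EB (φ u) (φ v) ∨ EB (φ v) (φ u))

/-!
Choose for every element `e` a set of the cover containing it. The `l ≤ d` sets actually
chosen, enumerated as `σ 0, …, σ (l-1)`, give the partition: `p_t` is the number of elements
assigned to `σ t`. Grouping the parts `g` at a time, the big star `c_k` is sent to the
`g`-set `{σ t : t in the k-th group}` of `M_g`, a small star `c'_k` to its single set in `M`,
its leaves bijectively to the elements assigned to its parts, and the remaining vertices
of `T_g^α` to their namesakes in `G_g`.
-/
open Finset

theorem exists_assignment_of_cover {α β : Type*} [Fintype α] [DecidableEq β]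
    (S : β → Finset α) (I : Finset β) (hcov : ∀ a, ∃ i ∈ I, a ∈ S i) :
    ∃ (l : ℕ) (τ : α → Fin l) (σ : Fin l → β), l ≤ #I ∧ Function.Surjective τ ∧
      Function.Injective σ ∧ ∀ a, a ∈ S (σ (τ a)) := by
  choose f hfI hfS using hcov
  let J := univ.image f
  refine ⟨#J, fun a => J.equivFin ⟨f a, mem_image_of_mem f (mem_univ a)⟩,
    fun t => J.equivFin.symm t, card_le_card ?_, fun t => ?_,
    Subtype.val_injective.comp J.equivFin.symm.injective, fun a => by simpa using hfS a⟩
  · intro i hi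
    obtain ⟨a, -, rfl⟩ := mem_image.mp hi
    exact hfI a
  · obtain ⟨a, -, ha⟩ := mem_image.mp (J.equivFin.symm t).2
    exact ⟨a, by simp [ha]⟩

theorem card_filter_comp_eq_sum {α β γ : Type*} [Fintype α] [Fintype β] [DecidableEq β]
    [DecidableEq γ] (τ : α → β) (π : β → γ) (c : γ) :
    #{a | π (τ a) = c} = ∑ b with π b = c, #{a | τ a = b} := by
  rw [card_eq_sum_card_fiberwise (f := τ) (t := {b | π b = c}) fun a ha => by simpa using ha]
  refine sum_congr rfl fun b hb => ?_
  rw [filter_filter]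
  exact congrArg card <| filter_congr fun a _ =>
    and_iff_right_of_imp fun h => h ▸ (mem_filter.mp hb).2

theorem exists_sigma_equiv_of_card_fiber {α C : Type*} [Fintype α] [DecidableEq C]
    (π : α → C) (cnt : C → ℕ) (hcnt : ∀ c, cnt c = #{a | π a = c}) :
    ∃ φ : (Σ c, Fin (cnt c)) ≃ α, ∀ x, π (φ x) = x.1 := by
  let e c : Fin (cnt c) ≃ {a // π a = c} :=
    (Fintype.equivFinOfCardEq (by rw [Fintype.card_subtype, hcnt])).symm
  exact ⟨(Equiv.sigmaCongrRight e).trans (Equiv.sigmaFiberEquiv π), fun x => (e x.1 x.2).2⟩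

section StarCenters

variable {l g : ℕ}

theorem pos_of_fin_div (k : Fin (l / g)) : 0 < g :=
  Nat.pos_of_ne_zero fun h => by simpa [h] using k.2

def bigPart (k : Fin (l / g)) (j : Fin g) : Fin l :=
  ⟨k * g + j, by
    have := Nat.div_mul_le_self l g
    nlinarith [k.2, j.2]⟩

def smallPart (k : Fin (l % g)) : Fin l :=
  ⟨g * (l / g) + k, by have := Nat.div_add_mod l g; omega⟩

theorem bigPart_injective (k : Fin (l / g)) : Function.Injective (bigPart k) := by
  intro j j' h
  simpa [bigPart, Fin.ext_iff] using h

theorem smallPart_injective : Function.Injective (smallPart (l := l) (g := g)) := by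
  intro k k' h
  simpa [smallPart, Fin.ext_iff] using h

theorem bigCnt_eq_sum (p : Fin l → ℕ) (k : Fin (l / g)) :
    bigCnt l g p k = ∑ j, p (bigPart k j) :=
  sum_congr rfl fun j _ => dif_pos (bigPart k j).2

theorem smallCnt_eq (p : Fin l → ℕ) (k : Fin (l % g)) :
    smallCnt l g p k = p (smallPart k) :=
  dif_pos (smallPart k).2

def starOf (t : Fin l) : PatC l g :=
  if h : t < g * (l / g) then .inl ⟨t / g, Nat.div_lt_of_lt_mul h⟩
  else .inr ⟨t - g * (l / g), by have := Nat.div_add_mod l g; omega⟩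

theorem starOf_eq_inl_iff {t : Fin l} {k : Fin (l / g)} :
    starOf t = .inl k ↔ ∃ j, bigPart k j = t := by
  have hg := pos_of_fin_div k
  unfold starOf
  split_ifs with h
  · simp only [Sum.inl.injEq, Fin.ext_iff, bigPart]
    constructor
    · intro htk
      exact ⟨⟨t % g, Nat.mod_lt _ hg⟩, htk ▸ Nat.div_add_mod' _ _⟩
    · rintro ⟨j, hj⟩
      rw [← hj, Nat.add_comm, Nat.add_mul_div_right _ _ hg, Nat.div_eq_of_lt j.2, zero_add]
  · simp only [false_iff, not_exists]
    intro j hj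
    apply h
    rw [← hj]
    simp only [bigPart]
    nlinarith [k.2, j.2]

theorem starOf_eq_inr_iff {t : Fin l} {k : Fin (l % g)} :
    starOf t = .inr k ↔ smallPart k = t := by
  unfold starOf
  split_ifs with h
  · simp only [false_iff]
    rintro rfl
    simp [smallPart] at h
  · simp only [Sum.inr.injEq, Fin.ext_iff, smallPart]
    omega

theorem starOf_surjective : Function.Surjective (starOf (l := l) (g := g)) := by
  rintro (k | k)
  · exact ⟨bigPart k ⟨0, pos_of_fin_div k⟩, starOf_eq_inl_iff.mpr ⟨_, rfl⟩⟩
  · exact ⟨smallPart k, starOf_eq_inr_iff.mpr rfl⟩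

theorem filter_starOf_eq_inl (k : Fin (l / g)) :
    ({t | starOf t = .inl k} : Finset (Fin l)) = univ.map ⟨bigPart k, bigPart_injective k⟩ := by
  ext t
  simp [starOf_eq_inl_iff]

theorem filter_starOf_eq_inr (k : Fin (l % g)) :
    ({t | starOf t = .inr k} : Finset (Fin l)) = {smallPart k} := by
  ext t
  simp [starOf_eq_inr_iff, eq_comm]

theorem patCnt_eq_sum (p : Fin l → ℕ) (c : PatC l g) :
    patCnt l g p c = ∑ t with starOf t = c, p t := by
  rcases c with k | k
  · rw [filter_starOf_eq_inl, sum_map]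
    exact bigCnt_eq_sum p k
  · rw [filter_starOf_eq_inr, sum_singleton]
    exact smallCnt_eq p k

end StarCenters

section Embedding

variable {n m g q l : ℕ} {p : Fin l → ℕ}

def patEmbed (big : Fin (l / g) → {X : Finset (Fin m) // X.card = g})
    (small : Fin (l % g) → Fin m) (leaf : (Σ c, Fin (patCnt l g p c)) → Fin n) :
    PatVert q l g p → HostV n m g q
  | .root i => .root i
  | .rv i j => .rv i j
  | .center (.inl k) => .gset (big k)
  | .center (.inr k) => .mset (small k)
  | .leaf c i => .elem (leaf ⟨c, i⟩)

theorem patEmbed_injective {big : Fin (l / g) → {X : Finset (Fin m) // X.card = g}}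
    {small : Fin (l % g) → Fin m} {leaf : (Σ c, Fin (patCnt l g p c)) → Fin n}
    (hbig : Function.Injective big) (hsmall : Function.Injective small)
    (hleaf : Function.Injective leaf) :
    Function.Injective (patEmbed (q := q) big small leaf) := by
  rintro (_ | _ | (_ | _) | ⟨c, i⟩) (_ | _ | (_ | _) | ⟨c', i'⟩) h <;>
    simp only [patEmbed, HostV.root.injEq, HostV.rv.injEq, HostV.gset.injEq,
      HostV.mset.injEq, HostV.elem.injEq, reduceCtorEq] at h
  · rw [h]
  · rw [h.1, h.2]
  · rw [hbig h]
  · rw [hsmall h]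
  · cases hleaf h
    rfl

theorem patEmbed_edge (S : Fin m → Finset (Fin n))
    {big : Fin (l / g) → {X : Finset (Fin m) // X.card = g}}
    {small : Fin (l % g) → Fin m} {leaf : (Σ c, Fin (patCnt l g p c)) → Fin n}
    (hbig : ∀ k i, ∃ j ∈ (big k).1, leaf ⟨.inl k, i⟩ ∈ S j)
    (hsmall : ∀ k i, leaf ⟨.inr k, i⟩ ∈ S (small k)) (u v : PatVert q l g p)
    (huv : patRel q l g p u v) :
    hostRel n m g q S (patEmbed big small leaf u) (patEmbed big small leaf v) ∨
      hostRel n m g q S (patEmbed big small leaf v) (patEmbed big small leaf u) := by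
  rcases huv with ⟨rfl, rfl | rfl | rfl⟩ | ⟨j, rfl, rfl⟩ | ⟨j, rfl, rfl⟩ | ⟨j, rfl, rfl⟩ |
    ⟨j, rfl, rfl⟩ | ⟨k, rfl, rfl⟩ | ⟨k, rfl, rfl⟩ | ⟨c | c, i, rfl, rfl⟩ <;>
    simp [hostRel, patEmbed, hbig, hsmall]

end Embedding

theorem isSubgraphIso_of_assignment {n m l : ℕ} (S : Fin m → Finset (Fin n))
    {τ : Fin n → Fin l} {σ : Fin l → Fin m} (hσ : Function.Injective σ)
    (hS : ∀ e, e ∈ S (σ (τ e))) (q g : ℕ) :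
    IsSubgraphIso (patRel q l g fun t => #{e | τ e = t}) (hostRel n m g q S) := by
  obtain ⟨φ, hφ⟩ := exists_sigma_equiv_of_card_fiber (fun e => starOf (τ e)) _
    fun c => (patCnt_eq_sum _ c).trans (card_filter_comp_eq_sum τ starOf c).symm
  let big (k : Fin (l / g)) : {X : Finset (Fin m) // X.card = g} :=
    ⟨({t | starOf t = .inl k} : Finset (Fin l)).map ⟨σ, hσ⟩, by
      rw [card_map, filter_starOf_eq_inl, card_map, card_univ, Fintype.card_fin]⟩
  refine ⟨patEmbed big (fun k => σ (smallPart k)) φ,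
    patEmbed_injective (fun k k' h => ?_) (hσ.comp smallPart_injective) φ.injective,
    patEmbed_edge S (fun k i => ?_) (fun k i => ?_)⟩
  · have hfib := map_injective _ (congrArg Subtype.val h)
    obtain ⟨t, ht⟩ := starOf_surjective (.inl k)
    have ht' : t ∈ ({t | starOf t = .inl k'} : Finset (Fin l)) :=
      hfib ▸ mem_filter.mpr ⟨mem_univ t, ht⟩
    exact Sum.inl_injective (ht.symm.trans (mem_filter.mp ht').2)
  · exact ⟨_, mem_map_of_mem _ (mem_filter.mpr ⟨mem_univ _, hφ ⟨.inl k, i⟩⟩), hS _⟩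
  · rw [starOf_eq_inr_iff.mp (hφ ⟨.inr k, i⟩)]
    exact hS _

theorem setcover_to_ktree_completeness_general (n m g : ℕ)
    (S : Fin m → Finset (Fin n))
    (d : ℕ) (I : Finset (Fin m)) (hI : I.card = d)
    (hcov : ∀ e : Fin n, ∃ i ∈ I, e ∈ S i) :
    ∃ (l : ℕ) (p : Fin l → ℕ),
      (∀ k, 0 < p k) ∧ (∑ k, p k = n) ∧ l ≤ d ∧
      IsSubgraphIso (patRel (2 * n / g) l g p) (hostRel n m g (2 * n / g) S) := by
  obtain ⟨l, τ, σ, hl, hτ, hσ, hS⟩ := exists_assignment_of_cover S I hcov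
  refine ⟨l, fun t => #{e | τ e = t}, fun t => ?_, ?_, hI ▸ hl,
    isSubgraphIso_of_assignment S hσ hS _ g⟩
  · obtain ⟨e, he⟩ := hτ t
    exact card_pos.mpr ⟨e, mem_filter.mpr ⟨mem_univ e, he⟩⟩
  · rw [← card_eq_sum_card_fiberwise fun e _ => mem_univ (τ e), card_univ, Fintype.card_fin]

theorem setcover_to_ktree_completeness (n m g : ℕ)
    (hn : 0 < n) (hm : 0 < m) (hg : 2 ≤ g) (hdvd : g ∣ 2 * n)
    (S : Fin m → Finset (Fin n))
    (d : ℕ) (hd : 1 ≤ d) (I : Finset (Fin m)) (hI : I.card = d)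
    (hcov : ∀ e : Fin n, ∃ i ∈ I, e ∈ S i) :
    ∃ (l : ℕ) (p : Fin l → ℕ),
      (∀ k, 0 < p k) ∧ (∑ k, p k = n) ∧ l ≤ d ∧
      IsSubgraphIso (patRel (2 * n / g) l g p) (hostRel n m g (2 * n / g) S) :=
  setcover_to_ktree_completeness_general n m g S d I hI hcov
end

section
/- Fix the construction of G_g and T_g^α described in the context, with positive integers n, m, g satisfying g ≥ 2 and g ∣ 2n, and assume additionally that g²·|S_i| ≤ n for every i ∈ {1,…,m}. If for some partition α of n with l parts the tree T_g^α is isomorphic to a subgraph of G_g, then there exist at most l indices i_1 < … < i_k in {1,…,m} (k ≤ l) with S_{i_1} ∪ ⋯ ∪ S_{i_k} = N. -/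
/-!
Degree counting pins down the roots. Every vertex of `G_g` other than the four roots
`r, r_g, r_1, r_2` and the elements of `N` has at most `q` neighbours (this is where
`g² |S_i| ≤ n` enters), while every root of `T_g^α` has more than `q`; call the roots and the
elements of `G_g` its hubs. No element is adjacent to a hub, and every edge between roots
contains `r`, so the copy permutes the roots, and `r'`, which has two root neighbours, goes to
`r`. A star center is then a non-root neighbour of a root, and a leaf a non-root neighbour of its
center, so the leaf lands on an element of `N` lying in one of the sets attached to the image
of its center: at most `g` of them for a big center, and a single one for a small center, whose
image is adjacent to `r`. The `n` leaves land on distinct elements, so these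
`g ⌊l/g⌋ + (l mod g) = l` sets cover `N`.
-/

open SimpleGraph Function

theorem IsSubgraphIso.isContained {α β : Type*} {r : α → α → Prop} {s : β → β → Prop}
    (h : IsSubgraphIso r s) : fromRel r ⊑ fromRel s := by
  obtain ⟨φ, hφ, hrs⟩ := h
  refine ⟨⟨⟨φ, ?_⟩, hφ⟩⟩
  rintro u v ⟨huv, h | h⟩
  · exact ⟨hφ.ne huv, hrs u v h⟩
  · exact ⟨hφ.ne huv, (hrs v u h).symm⟩

theorem SimpleGraph.Copy.encard_neighborSet_le {α β : Type*} {A : SimpleGraph α}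
    {B : SimpleGraph β} (f : Copy A B) (a : α) :
    (A.neighborSet a).encard ≤ (B.neighborSet (f a)).encard :=
  Set.encard_le_encard_of_injOn (fun _ h => f.toHom.apply_mem_neighborSet h) f.injective.injOn

theorem Set.encard_le_card_add_one_of_subset_insert_image {α β : Type*} {t : Set α} {a : α}
    {f : β → α} {s : Finset β} (h : t ⊆ insert a (f '' s)) : t.encard ≤ s.card + 1 :=
  calc t.encard ≤ (f '' s).encard + 1 := (Set.encard_le_encard h).trans (Set.encard_insert_le _ _)
    _ ≤ s.card + 1 := by grw [Set.encard_image_le, Set.encard_coe_eq_coe_finsetCard]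

theorem add_one_le_of_mul_le_of_mul_eq_two_mul {n g c q : ℕ} (hn : 0 < n)
    (hqg : q * g = 2 * n) (hc : g * c ≤ n) : c + 1 ≤ q := by
  rcases Nat.eq_zero_or_pos c with rfl | hc0
  · nlinarith
  · have hgn : g ≤ n := le_trans (Nat.le_mul_of_pos_right g hc0) hc
    nlinarith

def hostGraph (n m g q : ℕ) (S : Fin m → Finset (Fin n)) : SimpleGraph (HostV n m g q) :=
  fromRel (hostRel n m g q S)

def patGraph (q l g : ℕ) (p : Fin l → ℕ) : SimpleGraph (PatVert q l g p) :=
  fromRel (patRel q l g p)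

namespace HostV

variable {n m g q : ℕ}

def IsRoot (u : HostV n m g q) : Prop := ∃ t, u = root t

def IsHub (u : HostV n m g q) : Prop := u.IsRoot ∨ ∃ e, u = elem e

def setIndices : HostV n m g q → Finset (Fin m)
  | mset i => {i}
  | gset X => X.1
  | _ => ∅

theorem card_setIndices_le (hg : 1 ≤ g) (u : HostV n m g q) : u.setIndices.card ≤ g := by
  cases u with
  | mset i => simpa [setIndices] using hg
  | gset X => exact X.2.le
  | _ => simp [setIndices]

end HostV

section Host

open HostV

variable {n m g q : ℕ} {S : Fin m → Finset (Fin n)} {u v : HostV n m g q}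

theorem hostGraph_root_adj_root {s t : Fin 4} (h : (hostGraph n m g q S).Adj (root s) (root t)) :
    s = 3 ∨ t = 3 := by
  simp [hostGraph, hostRel] at h
  omega

theorem hostGraph_isRoot_of_adj_of_isHub (h : (hostGraph n m g q S).Adj u v) (hu : u.IsHub)
    (hv : v.IsHub) : u.IsRoot := by
  obtain ⟨t, rfl⟩ | ⟨e, rfl⟩ := hu
  · exact ⟨t, rfl⟩
  obtain ⟨t, rfl⟩ | ⟨e', rfl⟩ := hv <;> simp [hostGraph, hostRel] at h

theorem hostGraph_card_setIndices_le_one_of_adj_root_three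
    (h : (hostGraph n m g q S).Adj u (root 3)) : u.setIndices.card ≤ 1 := by
  cases u <;> simp_all [hostGraph, hostRel, setIndices]

theorem hostGraph_exists_elem_of_adj_of_adj_root {t : Fin 4} (huv : (hostGraph n m g q S).Adj u v)
    (hvt : (hostGraph n m g q S).Adj v (root t)) (hu : ¬u.IsRoot) (hv : ¬v.IsRoot) :
    ∃ e, u = elem e ∧ ∃ i ∈ v.setIndices, e ∈ S i := by
  cases v <;> cases u <;> simp_all [hostGraph, hostRel, setIndices, IsRoot]

theorem hostGraph_neighborSet_mset_subset (i : Fin m) :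
    (hostGraph n m g q S).neighborSet (mset i) ⊆ insert (root 3) (elem '' ↑(S i)) := by
  intro u hu
  cases u <;> simp_all [hostGraph, hostRel]

theorem hostGraph_neighborSet_gset_subset (X : {X : Finset (Fin m) // X.card = g}) :
    (hostGraph n m g q S).neighborSet (gset X) ⊆
      insert (root 0) (elem '' ↑(X.1.biUnion S)) := by
  intro u hu
  cases u <;> simp_all [hostGraph, hostRel]

theorem hostGraph_subsingleton_neighborSet_rv (i : Fin 4) (j : Fin q) :
    ((hostGraph n m g q S).neighborSet (rv i j)).Subsingleton := by
  intro a ha b hb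
  cases a <;> cases b <;> simp_all [hostGraph, hostRel]
  omega

theorem hostGraph_encard_neighborSet_le_of_not_isHub (hn : 0 < n) (hg : 1 ≤ g)
    (hqg : q * g = 2 * n) (hS : ∀ i, g ^ 2 * (S i).card ≤ n) (hu : ¬u.IsHub) :
    ((hostGraph n m g q S).neighborSet u).encard ≤ q := by
  have hgg : g ≤ g ^ 2 := Nat.le_self_pow two_ne_zero g
  cases u with
  | elem e => exact absurd (Or.inr ⟨e, rfl⟩) hu
  | root t => exact absurd (Or.inl ⟨t, rfl⟩) hu
  | rv i j =>
    calc _ ≤ 1 := Set.encard_le_one_iff_subsingleton.2 (hostGraph_subsingleton_neighborSet_rv i j)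
      _ ≤ q := by
        exact_mod_cast add_one_le_of_mul_le_of_mul_eq_two_mul (c := 0) hn hqg (Nat.zero_le _)
  | mset i =>
    have : g * (S i).card ≤ n := le_trans (Nat.mul_le_mul_right _ hgg) (hS i)
    calc _ ≤ ((S i).card : ℕ∞) + 1 :=
          Set.encard_le_card_add_one_of_subset_insert_image (hostGraph_neighborSet_mset_subset i)
      _ ≤ (q : ℕ∞) := by exact_mod_cast add_one_le_of_mul_le_of_mul_eq_two_mul hn hqg this
  | gset X =>
    have : g * (X.1.biUnion S).card ≤ n := by
      have hsum : g * (g * ∑ i ∈ X.1, (S i).card) ≤ g * n :=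
        calc g * (g * ∑ i ∈ X.1, (S i).card) = ∑ i ∈ X.1, g ^ 2 * (S i).card := by
              simp only [Finset.mul_sum, sq, mul_assoc]
          _ ≤ ∑ _i ∈ X.1, n := Finset.sum_le_sum fun i _ => hS i
          _ = g * n := by simp [X.2]
      calc g * (X.1.biUnion S).card ≤ g * ∑ i ∈ X.1, (S i).card :=
            Nat.mul_le_mul_left _ Finset.card_biUnion_le
        _ ≤ n := Nat.le_of_mul_le_mul_left hsum (by omega)
    calc _ ≤ ((X.1.biUnion S).card : ℕ∞) + 1 :=
          Set.encard_le_card_add_one_of_subset_insert_image (hostGraph_neighborSet_gset_subset X)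
      _ ≤ (q : ℕ∞) := by exact_mod_cast add_one_le_of_mul_le_of_mul_eq_two_mul hn hqg this

end Host

section Pattern

open PatV

variable {q l g : ℕ} {p : Fin l → ℕ}

theorem patGraph_adj_root_three {t : Fin 4} (ht : t ≠ 3) :
    (patGraph q l g p).Adj (root 3) (root t) := by
  fin_cases t <;> simp_all [patGraph, patRel]

theorem patGraph_adj_center_inr (k : Fin (l % g)) :
    (patGraph q l g p).Adj (center (.inr k)) (root 3) := by
  simp [patGraph, patRel]

theorem patGraph_exists_adj_center_root (c : PatC l g) :
    ∃ t, (patGraph q l g p).Adj (center c) (root t) := by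
  cases c with
  | inl k => exact ⟨0, by simp [patGraph, patRel]⟩
  | inr k => exact ⟨3, patGraph_adj_center_inr k⟩

theorem patGraph_adj_leaf (c : PatC l g) (i : Fin (patCnt l g p c)) :
    (patGraph q l g p).Adj (leaf c i) (center c) := by
  simp [patGraph, patRel]

theorem patGraph_lt_encard_neighborSet_root (t : Fin 4) :
    (q : ℕ∞) < ((patGraph q l g p).neighborSet (root t)).encard := by
  suffices key : ∀ s i, (patGraph q l g p).Adj (root t) (root s) →
      (∀ j, (patGraph q l g p).Adj (root t) (rv i j)) →
      (q : ℕ∞) < ((patGraph q l g p).neighborSet (root t)).encard by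
    fin_cases t
    · exact key 3 3 (by simp [patGraph, patRel]) (by simp [patGraph, patRel])
    · exact key 3 0 (by simp [patGraph, patRel]) (by simp [patGraph, patRel])
    · exact key 3 1 (by simp [patGraph, patRel]) (by simp [patGraph, patRel])
    · exact key 0 2 (by simp [patGraph, patRel]) (by simp [patGraph, patRel])
  intro s i hs hrv
  have hinj : Injective (rv i : Fin q → PatVert q l g p) := fun _ _ h => by cases h; rfl
  have hsub : insert (root s) (Set.range (rv i)) ⊆ (patGraph q l g p).neighborSet (root t) := by
    rintro x (rfl | ⟨j, rfl⟩)
    exacts [hs, hrv j]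
  calc (q : ℕ∞) < q + 1 := by exact_mod_cast Nat.lt_succ_self q
    _ ≤ (Set.range (rv i : Fin q → PatVert q l g p)).encard + 1 := by
        grw [← hinj.encard_range]; simp
    _ = (insert (root s) (Set.range (rv i))).encard :=
        (Set.encard_insert_of_notMem (by simp)).symm
    _ ≤ _ := Set.encard_le_encard hsub

end Pattern

open Finset in
theorem sum_patCnt (l g : ℕ) (p : Fin l → ℕ) : ∑ c, patCnt l g p c = ∑ k, p k := by
  set P : ℕ → ℕ := fun i => if h : i < l then p ⟨i, h⟩ else 0
  have hblocks : ∀ a,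
      ∑ k ∈ range a, ∑ j ∈ range g, P (k * g + j) = ∑ t ∈ range (a * g), P t := by
    intro a
    induction a with
    | zero => simp
    | succ a ih => rw [sum_range_succ, ih, Nat.succ_mul, sum_range_add]
  calc ∑ c, patCnt l g p c
      = ∑ k : Fin (l / g), bigCnt l g p k + ∑ k : Fin (l % g), smallCnt l g p k :=
        Fintype.sum_sum_type _
    _ = ∑ k ∈ range (l / g), ∑ j ∈ range g, P (k * g + j)
          + ∑ k ∈ range (l % g), P (l / g * g + k) := by
        simp only [bigCnt, smallCnt, mul_comm g, ← Fin.sum_univ_eq_sum_range]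
        rfl
    _ = ∑ t ∈ range l, P t := by rw [hblocks, ← sum_range_add, Nat.div_add_mod']
    _ = ∑ k, p k := by rw [← Fin.sum_univ_eq_sum_range]; simp [P]

theorem PatC.card_biUnion_le {l g : ℕ} {α : Type*} [DecidableEq α] (J : PatC l g → Finset α)
    (hbig : ∀ k, (J (.inl k)).card ≤ g) (hsmall : ∀ k, (J (.inr k)).card ≤ 1) :
    (Finset.univ.biUnion J).card ≤ l :=
  calc (Finset.univ.biUnion J).card ≤ ∑ c, (J c).card := Finset.card_biUnion_le
    _ = ∑ k, (J (.inl k)).card + ∑ k, (J (.inr k)).card := Fintype.sum_sum_type _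
    _ ≤ ∑ _k : Fin (l / g), g + ∑ _k : Fin (l % g), 1 :=
        add_le_add (Finset.sum_le_sum fun k _ => hbig k) (Finset.sum_le_sum fun k _ => hsmall k)
    _ = l := by simpa [mul_comm] using Nat.div_add_mod l g

section Copy

variable {n m g q l : ℕ} {S : Fin m → Finset (Fin n)} {p : Fin l → ℕ}
  (f : Copy (patGraph q l g p) (hostGraph n m g q S))

theorem isRoot_copy_root
    (hsparse : ∀ u : HostV n m g q, ¬u.IsHub →
      ((hostGraph n m g q S).neighborSet u).encard ≤ q)
    (t : Fin 4) : (f (PatV.root t)).IsRoot := by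
  have hhub : ∀ t, (f (PatV.root t)).IsHub := fun t => by
    by_contra h
    exact (patGraph_lt_encard_neighborSet_root t).not_ge
      ((f.encard_neighborSet_le _).trans (hsparse _ h))
  obtain ⟨s, hs⟩ : ∃ s, (patGraph q l g p).Adj (PatV.root t) (PatV.root s) := by
    by_cases ht : t = 3
    · exact ⟨0, ht ▸ patGraph_adj_root_three (by decide)⟩
    · exact ⟨3, (patGraph_adj_root_three ht).symm⟩
  exact hostGraph_isRoot_of_adj_of_isHub (f.toHom.map_adj hs) (hhub t) (hhub s)

theorem exists_perm_copy_root (hroot : ∀ t, (f (PatV.root t)).IsRoot) :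
    ∃ σ : Equiv.Perm (Fin 4), σ 3 = 3 ∧ ∀ t, f (PatV.root t) = HostV.root (σ t) := by
  choose σ hσ using hroot
  have hinj : Injective σ := fun a b h => by
    simpa using f.injective ((hσ a).trans ((congrArg HostV.root h).trans (hσ b).symm))
  refine ⟨Equiv.ofBijective σ ⟨hinj, Finite.injective_iff_surjective.1 hinj⟩, ?_, hσ⟩
  by_contra h3
  have hσ_eq_three : ∀ t ≠ 3, σ t = 3 := fun t ht => by
    have := f.toHom.map_adj (patGraph_adj_root_three (q := q) (p := p) ht)
    rw [Copy.toHom_apply, Copy.toHom_apply, hσ, hσ] at this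
    exact (hostGraph_root_adj_root this).resolve_left h3
  exact absurd (hinj ((hσ_eq_three 1 (by decide)).trans (hσ_eq_three 2 (by decide)).symm))
    (by decide)

theorem copy_root_three (hroot : ∀ t, (f (PatV.root t)).IsRoot) :
    f (PatV.root 3) = HostV.root 3 := by
  obtain ⟨σ, hσ3, hσ⟩ := exists_perm_copy_root f hroot
  rw [hσ, hσ3]

theorem not_isRoot_copy (hroot : ∀ t, (f (PatV.root t)).IsRoot) {x : PatVert q l g p}
    (hx : ∀ t, x ≠ PatV.root t) : ¬(f x).IsRoot := by
  rintro ⟨s, hs⟩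
  obtain ⟨σ, -, hσ⟩ := exists_perm_copy_root f hroot
  exact hx _ (f.injective (show f x = f (PatV.root (σ.symm s)) by
    rw [hσ, σ.apply_symm_apply, hs]))

end Copy

theorem setcover_to_ktree_soundness_general (n m g : ℕ)
    (hn : 0 < n) (hg : 2 ≤ g) (hdvd : g ∣ 2 * n)
    (S : Fin m → Finset (Fin n))
    (hsmall : ∀ i, g ^ 2 * (S i).card ≤ n)
    (l : ℕ) (p : Fin l → ℕ) (hsum : ∑ k, p k = n)
    (hiso : IsSubgraphIso (patRel (2 * n / g) l g p) (hostRel n m g (2 * n / g) S)) :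
    ∃ I : Finset (Fin m), I.card ≤ l ∧ ∀ e : Fin n, ∃ i ∈ I, e ∈ S i := by
  obtain ⟨f⟩ := hiso.isContained
  have hroot := isRoot_copy_root f fun _ hu =>
    hostGraph_encard_neighborSet_le_of_not_isHub hn (by omega) (Nat.div_mul_cancel hdvd) hsmall hu
  have hleaf : ∀ c i, ∃ e, f (.leaf c i) = .elem e ∧
      ∃ j ∈ (f (.center c)).setIndices, e ∈ S j := by
    intro c i
    obtain ⟨t, ht⟩ := patGraph_exists_adj_center_root c
    obtain ⟨s, hs⟩ := hroot t
    exact hostGraph_exists_elem_of_adj_of_adj_root (f.toHom.map_adj (patGraph_adj_leaf c i))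
      (hs ▸ f.toHom.map_adj ht) (not_isRoot_copy f hroot (by simp))
      (not_isRoot_copy f hroot (by simp))
  choose F hF hcov using hleaf
  have hFbij : Bijective fun x : Σ c, Fin (patCnt l g p c) => F x.1 x.2 := by
    refine (Fintype.bijective_iff_injective_and_card _).2
      ⟨?_, by simp only [Fintype.card_sigma, Fintype.card_fin, sum_patCnt, hsum]⟩
    rintro ⟨c, i⟩ ⟨c', i'⟩ h
    cases f.injective ((hF c i).trans ((congrArg HostV.elem h).trans (hF c' i').symm))
    rfl
  refine ⟨Finset.univ.biUnion fun c => (f (.center c)).setIndices,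
    PatC.card_biUnion_le _ (fun _ => HostV.card_setIndices_le (by omega) _) fun k =>
      hostGraph_card_setIndices_le_one_of_adj_root_three
        (copy_root_three f hroot ▸ f.toHom.map_adj (patGraph_adj_center_inr k)), fun e => ?_⟩
  obtain ⟨⟨c, i⟩, rfl⟩ := hFbij.2 e
  obtain ⟨j, hj, hej⟩ := hcov c i
  exact ⟨j, Finset.mem_biUnion.2 ⟨c, Finset.mem_univ _, hj⟩, hej⟩

theorem setcover_to_ktree_soundness (n m g : ℕ)
    (hn : 0 < n) (hm : 0 < m) (hg : 2 ≤ g) (hdvd : g ∣ 2 * n)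
    (S : Fin m → Finset (Fin n))
    (hsmall : ∀ i, g ^ 2 * (S i).card ≤ n)
    (l : ℕ) (p : Fin l → ℕ) (hp : ∀ k, 0 < p k) (hsum : ∑ k, p k = n)
    (hiso : IsSubgraphIso (patRel (2 * n / g) l g p) (hostRel n m g (2 * n / g) S)) :
    ∃ I : Finset (Fin m), I.card ≤ l ∧ ∀ e : Fin n, ∃ i ∈ I, e ∈ S i :=
  setcover_to_ktree_soundness_general n m g hn hg hdvd S hsmall l p hsum hiso
end
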